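/- Let L ≥ 4 be an integer, μ a real-valued function on the nonempty proper subsets of {1,…,L}, 𝒮 ⊂ {1,…,L} a subset with |𝒮| = S, and K an integer with 2 ≤ K ≤ S ≤ L−2. Then Σ_{i∈𝒮} Σ_{𝒦 : |𝒦| = K} J_i(𝒦) ≥ Σ_{𝒦 ⊆ 𝒮, |𝒦| = K} μ(𝒦) + ((K−1)/(L−1))·η(L,S,K), where η(L,S,K) = (α(L,S,K) + β(L,S,K)/(K−1))·μ̲_K − α(L,S,K)·μ̄_K, and the inner sums over 𝒦 range over subsets of {1,…,L} of cardinality K. -/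

import Mathlib

open Finset

/-- The contribution `J_i(𝒦)` from atom `a(𝒦)` to rate `r_i`. -/
noncomputable def J (L : ℕ) (μ : Finset (Fin L) → ℝ) (i : Fin L) (𝒦 : Finset (Fin L)) : ℝ :=
  if i ∈ 𝒦 then ((L : ℝ) - 𝒦.card) / ((L : ℝ) - 1) * μ 𝒦
  else -(((𝒦.card : ℝ) - 1) / ((L : ℝ) - 1)) * μ 𝒦

/-- The largest measure `μ̄_K` among atoms of weight `K`. -/
noncomputable def muMax (L : ℕ) (μ : Finset (Fin L) → ℝ) (K : ℕ) : ℝ :=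
  sSup {x : ℝ | ∃ 𝒦 : Finset (Fin L), 𝒦.card = K ∧ μ 𝒦 = x}

/-- The smallest measure `μ̲_K` among atoms of weight `K`. -/
noncomputable def muMin (L : ℕ) (μ : Finset (Fin L) → ℝ) (K : ℕ) : ℝ :=
  sInf {x : ℝ | ∃ 𝒦 : Finset (Fin L), 𝒦.card = K ∧ μ 𝒦 = x}

/-- `α(L,S,K) = S·C(L−1,K) − (S−K)·C(S,K)`. -/
def alphaC (L S K : ℕ) : ℤ :=
  (S : ℤ) * ((L - 1).choose K : ℤ) - ((S : ℤ) - (K : ℤ)) * (S.choose K : ℤ)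

/-- `β(L,S,K) = S·C(L−1,K) − (L−1)·C(S,K)`. -/
def betaC (L S K : ℕ) : ℤ :=
  (S : ℤ) * ((L - 1).choose K : ℤ) - ((L : ℤ) - 1) * (S.choose K : ℤ)

/-- The almost balanced conditional mutual information (ABCMI) condition. -/
noncomputable def ABCMI (L : ℕ) (μ : Finset (Fin L) → ℝ) : Prop :=
  muMax L μ (L - 1) ≤ muMin L μ (L - 1) * (1 + 1 / ((L : ℝ) - 2)) ∧
  ∀ K : ℕ, 2 ≤ K → K ≤ L - 2 →
    muMax L μ K ≤ muMin L μ K * (1 + (1 / ((K : ℝ) - 1)) *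
      sInf {x : ℝ | ∃ S : ℕ, K ≤ S ∧ S ≤ L - 2 ∧
        x = (betaC L S K : ℝ) / (alphaC L S K : ℝ)})

/-- `η(L,S,K) = (α + β/(K−1))·μ̲_K − α·μ̄_K`. -/
noncomputable def eta (L S K : ℕ) (μ : Finset (Fin L) → ℝ) : ℝ :=
  ((alphaC L S K : ℝ) + (betaC L S K : ℝ) / ((K : ℝ) - 1)) * muMin L μ K
    - (alphaC L S K : ℝ) * muMax L μ K

/-!
For a `K`-set `𝒦` meeting `𝒮` in `t` elements, `∑_{i ∈ 𝒮} J_i(𝒦) = c(𝒦) μ(𝒦)` with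
`c(𝒦) = t - S(K-1)/(L-1)`. If `𝒦 ⊆ 𝒮` then `c(𝒦) ≥ 1` (as `S ≤ L - 1`), so the term is at least
`μ(𝒦) + (c(𝒦) - 1) μ̲_K`. Otherwise `c(𝒦)` may be negative, but `c(𝒦) + b(𝒦) = t(L-K)/(L-1) ≥ 0` for
`b(𝒦) = (K-1)(S-t)/(L-1) ≥ 0`, so the term is at least `c(𝒦) μ̲_K - b(𝒦) (μ̄_K - μ̲_K)`.
These bounds are affine in `t`; summing them with `∑_𝒦 t = S·C(L-1,K-1)` and Pascal's rule gives
exactly the left-hand side.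
-/

theorem Finset.sum_card_inter_powersetCard_univ {α : Type*} [Fintype α] [DecidableEq α]
    (s : Finset α) {k : ℕ} (hk : 1 ≤ k) :
    ∑ t ∈ powersetCard k univ, #(s ∩ t) = #s * (Fintype.card α - 1).choose (k - 1) :=
  sum_card_inter fun a _ => by
    have h := card_filter_powersetCard_subset {a} univ k (subset_univ _) (by simpa)
    simpa only [singleton_subset_iff, card_singleton, card_univ] using h

theorem Nat.mul_choose_eq_mul_choose_succ_add (n k : ℕ) :
    n * n.choose k = k * (n + 1).choose (k + 1) + n.choose (k + 1) := by
  linarith [add_one_mul_choose_eq n k, choose_succ_succ' n k]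

theorem Nat.cast_sub_one_mul_choose_sub_one {L K : ℕ} (hL : 1 ≤ L) (hK : 1 ≤ K) :
    ((L : ℝ) - 1) * (L - 1).choose (K - 1) = ((K : ℝ) - 1) * L.choose K + (L - 1).choose K := by
  obtain ⟨n, rfl⟩ := Nat.exists_eq_add_of_le' hL
  obtain ⟨k, rfl⟩ := Nat.exists_eq_add_of_le' hK
  simp only [Nat.add_sub_cancel, Nat.cast_add, Nat.cast_one, add_sub_cancel_right]
  exact_mod_cast mul_choose_eq_mul_choose_succ_add n k

theorem mul_sub_mul_sub_le_mul {R : Type*} [CommRing R] [LinearOrder R] [IsStrictOrderedRing R]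
    {b c m M x : R} (hm : m ≤ x) (hM : x ≤ M) (hb : 0 ≤ b) (hcb : 0 ≤ c + b) :
    c * m - b * (M - m) ≤ c * x := by
  nlinarith [mul_nonneg hcb (sub_nonneg.2 hm), mul_nonneg hb (sub_nonneg.2 hM)]

section Atoms

variable {L : ℕ} (μ : Finset (Fin L) → ℝ)

theorem finite_measures_of_card (K : ℕ) :
    {x : ℝ | ∃ 𝒦 : Finset (Fin L), #𝒦 = K ∧ μ 𝒦 = x}.Finite :=
  (Set.finite_range μ).subset fun _ ⟨𝒦, _, h⟩ => ⟨𝒦, h⟩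

theorem muMin_le {K : ℕ} {𝒦 : Finset (Fin L)} (h𝒦 : #𝒦 = K) : muMin L μ K ≤ μ 𝒦 :=
  csInf_le (finite_measures_of_card μ K).bddBelow ⟨𝒦, h𝒦, rfl⟩

theorem le_muMax {K : ℕ} {𝒦 : Finset (Fin L)} (h𝒦 : #𝒦 = K) : μ 𝒦 ≤ muMax L μ K :=
  le_csSup (finite_measures_of_card μ K).bddAbove ⟨𝒦, h𝒦, rfl⟩

theorem J_eq (hL : 1 < L) (i : Fin L) (𝒦 : Finset (Fin L)) :
    J L μ i 𝒦 = ((if i ∈ 𝒦 then 1 else 0) - (#𝒦 - 1) / ((L : ℝ) - 1)) * μ 𝒦 := by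
  have hℓ : (L : ℝ) - 1 ≠ 0 := sub_ne_zero.2 (by exact_mod_cast hL.ne')
  unfold J
  split_ifs <;> field_simp <;> ring

theorem sum_J_eq (hL : 1 < L) (𝒮 𝒦 : Finset (Fin L)) :
    ∑ i ∈ 𝒮, J L μ i 𝒦 = (#(𝒮 ∩ 𝒦) - #𝒮 * (#𝒦 - 1) / ((L : ℝ) - 1)) * μ 𝒦 := by
  simp_rw [J_eq μ hL]
  rw [← sum_mul, sum_sub_distrib, sum_boole, filter_mem_eq_inter, sum_const, nsmul_eq_mul,
    mul_div_assoc]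

theorem le_sum_J_of_subset (hL : 1 < L) {𝒮 𝒦 : Finset (Fin L)} {K : ℕ} (h𝒦 : #𝒦 = K)
    (hK : 1 ≤ K) (h𝒦𝒮 : 𝒦 ⊆ 𝒮) (h𝒮 : #𝒮 < L) {m : ℝ} (hm : m ≤ μ 𝒦) :
    μ 𝒦 + (K - #𝒮 * (K - 1) / ((L : ℝ) - 1) - 1) * m ≤ ∑ i ∈ 𝒮, J L μ i 𝒦 := by
  rw [sum_J_eq μ hL, inter_eq_right.2 h𝒦𝒮, h𝒦]
  have hℓ : (0 : ℝ) < L - 1 := sub_pos.2 (by exact_mod_cast hL)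
  have hK' : (1 : ℝ) ≤ K := by exact_mod_cast hK
  have h𝒮' : (#𝒮 : ℝ) ≤ L - 1 := by
    rw [le_sub_iff_add_le]; exact_mod_cast h𝒮
  have hc : 0 ≤ (K : ℝ) - #𝒮 * (K - 1) / (L - 1) - 1 := by
    have : #𝒮 * ((K : ℝ) - 1) / (L - 1) ≤ K - 1 := by
      rw [div_le_iff₀ hℓ]; nlinarith
    linarith
  nlinarith [mul_le_mul_of_nonneg_left hm hc]

theorem le_sum_J (hL : 1 < L) (𝒮 : Finset (Fin L)) {𝒦 : Finset (Fin L)} {K : ℕ}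
    (h𝒦 : #𝒦 = K) (hK : 1 ≤ K) {m M : ℝ} (hm : m ≤ μ 𝒦) (hM : μ 𝒦 ≤ M) :
    (#(𝒮 ∩ 𝒦) - #𝒮 * (K - 1) / ((L : ℝ) - 1)) * m
        - (K - 1) * (#𝒮 - #(𝒮 ∩ 𝒦)) / ((L : ℝ) - 1) * (M - m)
      ≤ ∑ i ∈ 𝒮, J L μ i 𝒦 := by
  rw [sum_J_eq μ hL, h𝒦]
  have hℓ : (0 : ℝ) < L - 1 := sub_pos.2 (by exact_mod_cast hL)
  have hK' : (1 : ℝ) ≤ K := by exact_mod_cast hK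
  have hKL : (K : ℝ) ≤ L := by
    rw [← h𝒦]; exact_mod_cast (card_le_univ 𝒦).trans_eq (Fintype.card_fin L)
  have ht : (#(𝒮 ∩ 𝒦) : ℝ) ≤ #𝒮 := by exact_mod_cast card_le_card inter_subset_left
  apply mul_sub_mul_sub_le_mul hm hM
  · exact div_nonneg (mul_nonneg (by linarith) (by linarith)) hℓ.le
  · have : (#(𝒮 ∩ 𝒦) - #𝒮 * (K - 1) / ((L : ℝ) - 1)) + (K - 1) * (#𝒮 - #(𝒮 ∩ 𝒦)) / (L - 1)
        = #(𝒮 ∩ 𝒦) * (L - K) / (L - 1) := by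
      field_simp; ring
    rw [this]
    exact div_nonneg (mul_nonneg (Nat.cast_nonneg _) (by linarith)) hℓ.le

theorem sum_lowerBounds_eq (hL : 1 < L) (𝒮 : Finset (Fin L)) {K : ℕ} (hK : 2 ≤ K) :
    ∑ 𝒦 ∈ powersetCard K univ \ powersetCard K 𝒮,
        ((#(𝒮 ∩ 𝒦) - #𝒮 * (K - 1) / ((L : ℝ) - 1)) * muMin L μ K
          - (K - 1) * (#𝒮 - #(𝒮 ∩ 𝒦)) / ((L : ℝ) - 1) * (muMax L μ K - muMin L μ K))
      + ∑ 𝒦 ∈ powersetCard K 𝒮,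
        (μ 𝒦 + (K - #𝒮 * (K - 1) / ((L : ℝ) - 1) - 1) * muMin L μ K)
      = ∑ 𝒦 ∈ powersetCard K 𝒮, μ 𝒦 + ((K : ℝ) - 1) / ((L : ℝ) - 1) * eta L #𝒮 K μ := by
  set m := muMin L μ K
  set M := muMax L μ K
  set ℓ : ℝ := (L : ℝ) - 1
  have hℓ0 : ℓ ≠ 0 := sub_ne_zero.2 (by exact_mod_cast hL.ne')
  have hκ0 : (K : ℝ) - 1 ≠ 0 := sub_ne_zero.2 (by exact_mod_cast (by omega : K ≠ 1))
  have hPU : powersetCard K 𝒮 ⊆ powersetCard K univ := powersetCard_mono (subset_univ 𝒮)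
  have hN : (#(powersetCard K univ \ powersetCard K 𝒮) : ℝ) + ((#𝒮).choose K : ℕ) = L.choose K := by
    have h := card_sdiff_add_card_eq_card hPU
    rw [card_powersetCard, card_powersetCard, card_univ, Fintype.card_fin] at h
    exact_mod_cast h
  have hT : ∑ 𝒦 ∈ powersetCard K univ \ powersetCard K 𝒮, (#(𝒮 ∩ 𝒦) : ℝ)
      + K * ((#𝒮).choose K : ℕ) = #𝒮 * (L - 1).choose (K - 1) := by
    have hP : ∑ 𝒦 ∈ powersetCard K 𝒮, #(𝒮 ∩ 𝒦) = (#𝒮).choose K * K := by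
      rw [sum_congr rfl fun 𝒦 h𝒦 => by
          rw [inter_eq_right.2 (mem_powersetCard.1 h𝒦).1, (mem_powersetCard.1 h𝒦).2],
        sum_const, card_powersetCard, smul_eq_mul]
    have h := sum_sdiff hPU (f := fun 𝒦 => #(𝒮 ∩ 𝒦))
    rw [hP, sum_card_inter_powersetCard_univ 𝒮 (by omega), Fintype.card_fin, mul_comm] at h
    exact_mod_cast h
  have hPascal : ((L.choose K : ℕ) : ℝ) = (L - 1).choose (K - 1) + (L - 1).choose K := by
    exact_mod_cast Nat.choose_eq_choose_pred_add (by omega) (by omega)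
  have hC : (((L - 1).choose (K - 1) : ℕ) : ℝ) = ((K - 1) * L.choose K + (L - 1).choose K) / ℓ := by
    rw [eq_div_iff hℓ0, mul_comm]
    exact Nat.cast_sub_one_mul_choose_sub_one hL.le (by omega)
  have hη : ((K : ℝ) - 1) / ℓ * eta L #𝒮 K μ
      = (((K : ℝ) - 1) * alphaC L #𝒮 K * (m - M) + #𝒮 * (L - 1).choose K * m) / ℓ
        - (#𝒮).choose K * m := by
    unfold eta betaC; push_cast; field_simp; ring
  have haffine : ∀ t : ℝ, (t - #𝒮 * (K - 1) / ℓ) * m - (K - 1) * (#𝒮 - t) / ℓ * (M - m)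
      = t * (m + (K - 1) * (M - m) / ℓ) - #𝒮 * (K - 1) * M / ℓ := fun t => by
    field_simp; ring
  simp_rw [haffine]
  rw [sum_sub_distrib, ← sum_mul, sum_const, nsmul_eq_mul, sum_add_distrib, sum_const,
    card_powersetCard, nsmul_eq_mul, hη, alphaC]
  push_cast
  linear_combination (m + (K - 1) * (M - m) / ℓ) * hT - #𝒮 * (K - 1) * M / ℓ * hN
    + #𝒮 * (K - 1) * (m - M) / ℓ * hPascal + #𝒮 * m * hC

end Atoms

theorem stmt8_general (L : ℕ) (hL : 4 ≤ L) (μ : Finset (Fin L) → ℝ)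
    (S K : ℕ) (𝒮 : Finset (Fin L)) (h𝒮 : 𝒮.card = S)
    (hK : 2 ≤ K) (hSL : S ≤ L - 2) :
    ∑ 𝒦 ∈ Finset.powersetCard K 𝒮, μ 𝒦 + (((K : ℝ) - 1) / ((L : ℝ) - 1)) * eta L S K μ
      ≤ ∑ i ∈ 𝒮, ∑ 𝒦 ∈ Finset.univ.filter (fun 𝒦 : Finset (Fin L) => 𝒦.card = K),
          J L μ i 𝒦 := by
  subst h𝒮
  have hL1 : 1 < L := by omega
  have hU : univ.filter (fun 𝒦 : Finset (Fin L) => #𝒦 = K) = powersetCard K univ := by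
    ext; simp
  rw [sum_comm, hU, ← sum_sdiff (powersetCard_mono (subset_univ 𝒮)),
    ← sum_lowerBounds_eq μ hL1 𝒮 hK]
  refine add_le_add (sum_le_sum fun 𝒦 h𝒦 => ?_) (sum_le_sum fun 𝒦 h𝒦 => ?_)
  · have h𝒦K := mem_powersetCard_univ.1 (mem_sdiff.1 h𝒦).1
    exact le_sum_J μ hL1 𝒮 h𝒦K (by omega) (muMin_le μ h𝒦K) (le_muMax μ h𝒦K)
  · obtain ⟨h𝒦𝒮, h𝒦K⟩ := mem_powersetCard.1 h𝒦
    exact le_sum_J_of_subset μ hL1 h𝒦K (by omega) h𝒦𝒮 (by omega) (muMin_le μ h𝒦K)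

theorem stmt8 (L : ℕ) (hL : 4 ≤ L) (μ : Finset (Fin L) → ℝ)
    (S K : ℕ) (𝒮 : Finset (Fin L)) (h𝒮 : 𝒮.card = S)
    (hK : 2 ≤ K) (hKS : K ≤ S) (hSL : S ≤ L - 2) :
    ∑ 𝒦 ∈ Finset.powersetCard K 𝒮, μ 𝒦 + (((K : ℝ) - 1) / ((L : ℝ) - 1)) * eta L S K μ
      ≤ ∑ i ∈ 𝒮, ∑ 𝒦 ∈ Finset.univ.filter (fun 𝒦 : Finset (Fin L) => 𝒦.card = K),
          J L μ i 𝒦 :=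
  stmt8_general L hL μ S K 𝒮 h𝒮 hK hSL
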